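/- arXiv:math/0504204 — 3 statements merged into one kernel-verified Lean document; each statement's English description precedes it below -/
import Mathlib

section
/- Let R be a Bézout domain (an integral domain in which every finitely generated ideal is principal). Then every finitely generated submodule of a finite free R-module is free. -/
/-!
Induct on the rank. For a finitely generated `N ≤ R × P`, the image of `N` under the first
projection is a finitely generated ideal, hence principal, hence free. A surjection onto a free
module splits, so `N ≅ (N ∩ P) × image`, and `N ∩ P` is finitely generated, being a direct
summand of `N`; it is free by induction.
-/

open LinearMap Module

theorem Submodule.IsPrincipal.free {R M : Type*} [Ring R] [IsDomain R] [AddCommGroup M]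
    [Module R M] [IsTorsionFree R M] {N : Submodule R M} (hN : N.IsPrincipal) :
    Module.Free R N := by
  obtain ⟨x, rfl⟩ := hN.principal
  by_cases hx : x = 0
  · subst hx
    rw [Submodule.span_singleton_eq_bot.mpr rfl]
    infer_instance
  · exact .of_equiv (LinearEquiv.toSpanNonzeroSingleton R M x hx)

theorem LinearMap.nonempty_equiv_ker_prod_range {R M P : Type*} [Ring R] [AddCommGroup M]
    [Module R M] [AddCommGroup P] [Module R P] (f : M →ₗ[R] P) [Projective R (range f)] :
    Nonempty (M ≃ₗ[R] ker f × range f) := by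
  obtain ⟨s, hs⟩ := f.rangeRestrict.exists_rightInverse_of_surjective f.range_rangeRestrict
  obtain ⟨e, -⟩ := f.rangeRestrict.exact_subtype_ker_map.splitSurjectiveEquiv
    (ker f.rangeRestrict).injective_subtype ⟨s, hs⟩
  exact ⟨e.trans ((LinearEquiv.ofEq _ _ f.ker_rangeRestrict).prodCongr (.refl R _))⟩

def FGSubmodulesFree (R P : Type*) [Semiring R] [AddCommMonoid P] [Module R P] : Prop :=
  ∀ N : Submodule R P, N.FG → Module.Free R N

namespace FGSubmodulesFree

section Semiring

variable {R P : Type*} [Semiring R] [AddCommMonoid P] [Module R P]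

theorem free_of_injective (hP : FGSubmodulesFree R P) {N : Type*} [AddCommMonoid N]
    [Module R N] [Module.Finite R N] {f : N →ₗ[R] P} (hf : Function.Injective f) :
    Module.Free R N :=
  have := hP (range f) (Module.Finite.iff_fg.mp inferInstance)
  .of_equiv (LinearEquiv.ofInjective f hf).symm

theorem of_equiv {Q : Type*} [AddCommMonoid Q] [Module R Q] (hP : FGSubmodulesFree R P)
    (e : Q ≃ₗ[R] P) : FGSubmodulesFree R Q := fun N hN =>
  have : Module.Finite R N := Module.Finite.iff_fg.mpr hN
  hP.free_of_injective (f := e.toLinearMap ∘ₗ N.subtype) (e.injective.comp N.injective_subtype)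

end Semiring

variable {R P : Type*} [CommRing R] [IsDomain R] [IsBezout R] [AddCommGroup P] [Module R P]

theorem prod (hP : FGSubmodulesFree R P) : FGSubmodulesFree R (R × P) := by
  intro N hN
  have : Module.Finite R N := Module.Finite.iff_fg.mpr hN
  let g : N →ₗ[R] R := (fst R R P).domRestrict N
  have : Module.Free R (range g) :=
    (IsBezout.isPrincipal_of_FG _ (Module.Finite.iff_fg.mp inferInstance)).free
  obtain ⟨e⟩ := g.nonempty_equiv_ker_prod_range
  have : Module.Finite R (ker g) :=
    .of_surjective ((fst R _ _) ∘ₗ e.toLinearMap) (Prod.fst_surjective.comp e.surjective)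
  have : Module.Free R (ker g) := by
    refine hP.free_of_injective (f := snd R R P ∘ₗ N.subtype ∘ₗ (ker g).subtype) ?_
    intro x y hxy
    exact Subtype.ext <| Subtype.ext <| Prod.ext (x.2.trans y.2.symm) hxy
  exact .of_equiv e.symm

theorem pi_fin (n : ℕ) : FGSubmodulesFree R (Fin n → R) := by
  induction n with
  | zero => exact fun N _ => inferInstance
  | succ n ih => exact ih.prod.of_equiv (Fin.consLinearEquiv R fun _ => R).symm

end FGSubmodulesFree

/-- Over a Bézout domain (an integral domain in which every finitely generated ideal is
principal), every finitely generated submodule of a finite free module is free. -/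
theorem fg_submodule_of_finite_free_is_free
    {R : Type*} [CommRing R] [IsDomain R] [IsBezout R]
    {M : Type*} [AddCommGroup M] [Module R M]
    [Module.Free R M] [Module.Finite R M]
    (N : Submodule R M) (hN : N.FG) :
    Module.Free R ↥N :=
  (FGSubmodulesFree.pi_fin _).of_equiv (Module.finBasis R M).equivFun N hN
end

section
/- Let K be a perfect field of characteristic p equipped with a valuation v_K, let W(K) be the ring of p-typical Witt vectors over K, and for x = Σ_{i≥0} [z_i] p^i ∈ W(K) (Teichmüller expansion) define the partial valuation v_n(x) = min_{i ≤ n} v_K(z_i). Then for all x, y ∈ W(K) and all n, v_n(x + y) ≥ min(v_n(x), v_n(y)), with equality if the minimum is achieved exactly once. -/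
/-- `z` is the sequence of Teichmüller coordinates of the Witt vector `x`:
`x = ∑_{i≥0} [z i] pⁱ`, expressed via the `p`-adic congruences saying that `x` agrees with
each partial sum modulo `p^(n+1)`. -/
def IsTeichmullerExpansion (p : ℕ) [Fact p.Prime] {K : Type*} [CommRing K]
    (z : ℕ → K) (x : WittVector p K) : Prop :=
  ∀ n : ℕ, (p : WittVector p K) ^ (n + 1) ∣
    (x - ∑ i ∈ Finset.range (n + 1),
      WittVector.teichmuller p (z i) * (p : WittVector p K) ^ i)

/-- The partial valuation `v_n(x) = min_{i ≤ n} v_K(z_i)` of a Witt vector with Teichmüller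
coordinates `z`. -/
noncomputable def partialVal {K : Type*} (vK : K → WithTop ℝ)
    (z : ℕ → K) (n : ℕ) : WithTop ℝ :=
  (Finset.range (n + 1)).inf fun i => vK (z i)

/-!
The Witt coordinates of `x = ∑ [zᵢ] pⁱ` are `zᵢ ^ pⁱ`, and the first `n + 1` Witt coordinates of
`x + y` depend only on those of `x` and `y`. Multiplying by `[u⁻¹]`, where `u` is a digit of
minimal valuation, multiplies all digits by `u⁻¹`, so we may assume that the digits of `x` and `y`
up to `n` lie in the valuation ring `𝒪 = {v ≥ 0}`. Then `x` and `y` agree up to `n` with Witt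
vectors over `𝒪`, hence so does `x + y`. If moreover the digits of `y` lie in `𝔪 = {v > 0}`,
reducing modulo `𝔪` kills `y`, so the digits of `x + y` and of `x` agree modulo `𝔪` (in
characteristic `p`, `a ^ pⁱ - b ^ pⁱ = (a - b) ^ pⁱ`); this gives the equality case.
-/

namespace WittVector

variable {p : ℕ} {R : Type*} [CommRing R]

local notation "𝕎" => WittVector p

theorem exists_coeff_eq_coe (S : Subring R) {x : 𝕎 R} {n : ℕ} (hx : ∀ i < n, x.coeff i ∈ S) :
    ∃ X : 𝕎 S, ∀ i < n, x.coeff i = X.coeff i :=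
  ⟨mk p fun i => if h : i < n then ⟨x.coeff i, hx i h⟩ else 0, fun i hi => by simp [hi]⟩

variable [Fact p.Prime]

theorem coeff_add_congr {x y x' y' : 𝕎 R} {n : ℕ} (hx : ∀ i < n, x.coeff i = x'.coeff i)
    (hy : ∀ i < n, y.coeff i = y'.coeff i) : ∀ i < n, (x + y).coeff i = (x' + y').coeff i := by
  have truncate_eq {w w' : 𝕎 R} (h : ∀ i < n, w.coeff i = w'.coeff i) :
      truncate n w = truncate n w' := by
    ext i
    simp [h i i.2]
  intro i hi
  rw [← coeff_truncate (x + y) ⟨i, hi⟩, ← coeff_truncate (x' + y') ⟨i, hi⟩, map_add, map_add,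
    truncate_eq hx, truncate_eq hy]

theorem coeff_add_eq_coe {S : Subring R} {x y : 𝕎 R} {X Y : 𝕎 S} {n : ℕ}
    (hX : ∀ i < n, x.coeff i = X.coeff i) (hY : ∀ i < n, y.coeff i = Y.coeff i) :
    ∀ i < n, (x + y).coeff i = (X + Y).coeff i := by
  intro i hi
  rw [coeff_add_congr (x' := map S.subtype X) (y' := map S.subtype Y)
    (fun j hj => by rw [map_coeff, hX j hj]; rfl) (fun j hj => by rw [map_coeff, hY j hj]; rfl)
    i hi, ← map_add, map_coeff]
  rfl

theorem coeff_add_sub_coeff_mem {I : Ideal R} {x y : 𝕎 R} {n : ℕ}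
    (hy : ∀ i < n, y.coeff i ∈ I) : ∀ i < n, (x + y).coeff i - x.coeff i ∈ I := by
  intro i hi
  have hmap := coeff_add_congr (x := map (Ideal.Quotient.mk I) x)
    (y := map (Ideal.Quotient.mk I) y) (y' := 0) (fun _ _ => rfl)
    (fun j hj => by rw [map_coeff, zero_coeff, Ideal.Quotient.eq_zero_iff_mem.2 (hy j hj)]) i hi
  rw [← map_add, add_zero, map_coeff, map_coeff] at hmap
  exact Ideal.Quotient.eq.1 hmap

section CharP

variable [CharP R p]

theorem coeff_sum_teichmuller_mul_pow (z : ℕ → R) {i n : ℕ} (hi : i < n) :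
    (∑ k ∈ Finset.range n, teichmuller p (z k) * (p : 𝕎 R) ^ k).coeff i = z i ^ p ^ i := by
  rw [sum_coeff_eq_coeff_sum, Finset.sum_eq_single_of_mem i (Finset.mem_range.2 hi),
    teichmuller_mul_pow_coeff]
  · exact fun k _ hk => teichmuller_mul_pow_coeff_of_ne _ (Ne.symm hk)
  · refine fun m => ⟨fun ⟨a, _, ha⟩ ⟨b, _, hb⟩ => Subtype.ext ?_⟩
    have ha' := Not.imp_symm (teichmuller_mul_pow_coeff_of_ne _) ha
    have hb' := Not.imp_symm (teichmuller_mul_pow_coeff_of_ne _) hb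
    show a = b
    omega

end CharP

end WittVector

namespace IsTeichmullerExpansion

variable {p : ℕ} [Fact p.Prime] {R : Type*} [CommRing R] {z : ℕ → R} {x : WittVector p R}

theorem teichmuller_mul (hx : IsTeichmullerExpansion p z x) (u : R) :
    IsTeichmullerExpansion p (fun i => u * z i) (WittVector.teichmuller p u * x) := fun n => by
  simpa only [map_mul, mul_assoc, ← Finset.mul_sum, ← mul_sub] using
    (hx n).mul_left (WittVector.teichmuller p u)

variable [CharP R p]

theorem coeff_eq (hx : IsTeichmullerExpansion p z x) (i : ℕ) : x.coeff i = z i ^ p ^ i := by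
  obtain ⟨c, hc⟩ := hx i
  have hsub : ∀ j < i + 1, (x - ∑ k ∈ Finset.range (i + 1),
      WittVector.teichmuller p (z k) * (p : WittVector p R) ^ k).coeff j = 0 := fun j hj => by
    rw [hc, mul_comm]
    exact WittVector.mul_pow_charP_coeff_zero c hj
  rw [WittVector.le_coeff_eq_iff_le_sub_coeff_eq_zero.2 hsub i i.lt_succ_self,
    WittVector.coeff_sum_teichmuller_mul_pow z i.lt_succ_self]

end IsTeichmullerExpansion

namespace AddValuation

variable {R : Type*} {Γ₀ : Type*} [LinearOrderedAddCommGroupWithTop Γ₀]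

section CommRing

variable [CommRing R] (v : AddValuation R Γ₀)

def integer : Subring R where
  carrier := {r | 0 ≤ v r}
  mul_mem' {a b} ha hb := by
    show 0 ≤ v (a * b)
    rw [v.map_mul]
    exact add_nonneg ha hb
  one_mem' := v.map_one.symm.le
  add_mem' := v.map_le_add
  zero_mem' := le_top.trans_eq v.map_zero.symm
  neg_mem' {a} ha := by
    show 0 ≤ v (-a)
    rwa [v.map_neg]

def positiveIdeal : Ideal v.integer where
  carrier := {r | 0 < v r}
  add_mem' := v.map_lt_add
  zero_mem' := LinearOrderedAddCommGroupWithTop.top_pos.trans_eq v.map_zero.symm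
  smul_mem' c {r} hr := by
    show 0 < v (c * r)
    rw [v.map_mul]
    exact hr.trans_le (le_add_of_nonneg_left c.2)

theorem mem_positiveIdeal {r : v.integer} : r ∈ v.positiveIdeal ↔ 0 < v r := Iff.rfl

end CommRing

section Field

variable {K : Type*} [Field K] (v : AddValuation K Γ₀) {u : K}

theorem map_eq_add_map_inv_mul (hu : u ≠ 0) (z : K) : v z = v u + v (u⁻¹ * z) := by
  rw [← v.map_mul, mul_inv_cancel_left₀ hu]

theorem map_inv_mul_nonneg_iff (hu : u ≠ 0) (z : K) : 0 ≤ v (u⁻¹ * z) ↔ v u ≤ v z := by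
  rw [v.map_eq_add_map_inv_mul hu z, ← add_le_add_iff_right_of_ne_top (v.ne_top_iff.2 hu),
    add_zero]

theorem map_inv_mul_pos_iff (hu : u ≠ 0) (z : K) : 0 < v (u⁻¹ * z) ↔ v u < v z := by
  rw [v.map_eq_add_map_inv_mul hu z, ← add_lt_add_iff_right_of_ne_top (v.ne_top_iff.2 hu),
    add_zero]

end Field

end AddValuation

namespace WittVector

variable {p : ℕ} [Fact p.Prime] {R : Type*} [CommRing R] {Γ₀ : Type*}
  [LinearOrderedAddCommGroupWithTop Γ₀] (v : AddValuation R Γ₀) {x y : WittVector p R} {n : ℕ}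

theorem coeff_add_nonneg (hx : ∀ i < n, 0 ≤ v (x.coeff i)) (hy : ∀ i < n, 0 ≤ v (y.coeff i)) :
    ∀ i < n, 0 ≤ v ((x + y).coeff i) := by
  obtain ⟨X, hX⟩ := exists_coeff_eq_coe v.integer hx
  obtain ⟨Y, hY⟩ := exists_coeff_eq_coe v.integer hy
  intro i hi
  rw [coeff_add_eq_coe hX hY i hi]
  exact ((X + Y).coeff i).2

theorem coeff_add_sub_coeff_pos (hx : ∀ i < n, 0 ≤ v (x.coeff i))
    (hy : ∀ i < n, 0 < v (y.coeff i)) : ∀ i < n, 0 < v ((x + y).coeff i - x.coeff i) := by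
  obtain ⟨X, hX⟩ := exists_coeff_eq_coe v.integer hx
  obtain ⟨Y, hY⟩ := exists_coeff_eq_coe v.integer fun i hi => (hy i hi).le
  have hY_pos : ∀ i < n, Y.coeff i ∈ v.positiveIdeal := fun i hi => by
    rw [v.mem_positiveIdeal, ← hY i hi]
    exact hy i hi
  intro i hi
  rw [coeff_add_eq_coe hX hY i hi, hX i hi]
  exact coeff_add_sub_coeff_mem hY_pos i hi

end WittVector

namespace IsTeichmullerExpansion

variable {p : ℕ} [hp : Fact p.Prime] {Γ₀ : Type*} [LinearOrderedAddCommGroupWithTop Γ₀]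

section CommRing

variable {R : Type*} [CommRing R] [CharP R p] (v : AddValuation R Γ₀) {z : ℕ → R}
  {x : WittVector p R}

theorem map_coeff_nonneg_iff (hx : IsTeichmullerExpansion p z x) (i : ℕ) :
    0 ≤ v (x.coeff i) ↔ 0 ≤ v (z i) := by
  rw [hx.coeff_eq, v.map_pow, nsmul_nonneg_iff (pow_ne_zero _ hp.out.ne_zero)]

theorem map_coeff_pos_iff (hx : IsTeichmullerExpansion p z x) (i : ℕ) :
    0 < v (x.coeff i) ↔ 0 < v (z i) := by
  rw [hx.coeff_eq, v.map_pow, nsmul_pos_iff (pow_ne_zero _ hp.out.ne_zero)]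

end CommRing

variable {K : Type*} [Field K] [CharP K p] (v : AddValuation K Γ₀) {x y : WittVector p K}
  {zx zy zs : ℕ → K} {n : ℕ}

theorem digit_add_eq_zero (hx : IsTeichmullerExpansion p zx x)
    (hy : IsTeichmullerExpansion p zy y) (hs : IsTeichmullerExpansion p zs (x + y))
    (hzx : ∀ i < n, zx i = 0) (hzy : ∀ i < n, zy i = 0) : ∀ i < n, zs i = 0 := by
  have hpow : ∀ i, p ^ i ≠ 0 := fun i => pow_ne_zero _ hp.out.ne_zero
  have hsum := WittVector.coeff_add_congr (x' := 0) (y' := 0)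
    (fun i hi => by rw [hx.coeff_eq, hzx i hi, zero_pow (hpow i), WittVector.zero_coeff])
    (fun i hi => by rw [hy.coeff_eq, hzy i hi, zero_pow (hpow i), WittVector.zero_coeff])
  intro i hi
  rw [← pow_eq_zero_iff (hpow i), ← hs.coeff_eq, hsum i hi, add_zero, WittVector.zero_coeff]

theorem le_map_add_digit (hx : IsTeichmullerExpansion p zx x)
    (hy : IsTeichmullerExpansion p zy y) (hs : IsTeichmullerExpansion p zs (x + y)) (u : K)
    (hxu : ∀ i < n, v u ≤ v (zx i)) (hyu : ∀ i < n, v u ≤ v (zy i)) :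
    ∀ i < n, v u ≤ v (zs i) := by
  rcases eq_or_ne u 0 with rfl | hu
  · have digit_eq_zero {z : ℕ → K} (h : ∀ i < n, v 0 ≤ v (z i)) (i : ℕ) (hi : i < n) :
        z i = 0 :=
      v.top_iff.1 (top_le_iff.1 (v.map_zero ▸ h i hi))
    intro i hi
    rw [digit_add_eq_zero hx hy hs (digit_eq_zero hxu) (digit_eq_zero hyu) i hi]
  have hx' := hx.teichmuller_mul u⁻¹
  have hy' := hy.teichmuller_mul u⁻¹
  have hs' := hs.teichmuller_mul u⁻¹
  rw [mul_add] at hs'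
  intro i hi
  rw [← v.map_inv_mul_nonneg_iff hu, ← hs'.map_coeff_nonneg_iff v]
  refine WittVector.coeff_add_nonneg v (fun j hj => ?_) (fun j hj => ?_) i hi
  · exact (hx'.map_coeff_nonneg_iff v j).2 ((v.map_inv_mul_nonneg_iff hu _).2 (hxu j hj))
  · exact (hy'.map_coeff_nonneg_iff v j).2 ((v.map_inv_mul_nonneg_iff hu _).2 (hyu j hj))

theorem lt_map_add_digit_sub (hx : IsTeichmullerExpansion p zx x)
    (hy : IsTeichmullerExpansion p zy y) (hs : IsTeichmullerExpansion p zs (x + y)) {u : K}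
    (hu : u ≠ 0) (hxu : ∀ i < n, v u ≤ v (zx i)) (hyu : ∀ i < n, v u < v (zy i)) :
    ∀ i < n, v u < v (zs i - zx i) := by
  have hx' := hx.teichmuller_mul u⁻¹
  have hy' := hy.teichmuller_mul u⁻¹
  have hs' := hs.teichmuller_mul u⁻¹
  rw [mul_add] at hs'
  intro i hi
  have hdiff := WittVector.coeff_add_sub_coeff_pos v
    (fun j hj => (hx'.map_coeff_nonneg_iff v j).2 ((v.map_inv_mul_nonneg_iff hu _).2 (hxu j hj)))
    (fun j hj => (hy'.map_coeff_pos_iff v j).2 ((v.map_inv_mul_pos_iff hu _).2 (hyu j hj))) i hi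
  rwa [hs'.coeff_eq, hx'.coeff_eq, ← sub_pow_char_pow, v.map_pow,
    nsmul_pos_iff (pow_ne_zero _ hp.out.ne_zero), ← mul_sub, v.map_inv_mul_pos_iff hu] at hdiff

end IsTeichmullerExpansion

section partialVal

variable {K : Type*} (f : K → WithTop ℝ) (z : ℕ → K) {n : ℕ}

theorem partialVal_le {i : ℕ} (hi : i < n + 1) : partialVal f z n ≤ f (z i) :=
  Finset.inf_le (Finset.mem_range.2 hi)

theorem le_partialVal_iff {c : WithTop ℝ} : c ≤ partialVal f z n ↔ ∀ i < n + 1, c ≤ f (z i) := by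
  simp [partialVal, Finset.le_inf_iff]

theorem exists_partialVal_eq (n : ℕ) : ∃ i < n + 1, partialVal f z n = f (z i) := by
  obtain ⟨i, hi, h⟩ :=
    Finset.exists_mem_eq_inf (Finset.range (n + 1)) Finset.nonempty_range_add_one fun i => f (z i)
  exact ⟨i, Finset.mem_range.1 hi, h⟩

end partialVal

section partialVal_add

variable {p : ℕ} [Fact p.Prime] {K : Type*} [Field K] [CharP K p]
  (v : AddValuation K (WithTop ℝ)) {x y : WittVector p K} {zx zy zs : ℕ → K}

theorem min_partialVal_le_partialVal_add (hx : IsTeichmullerExpansion p zx x)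
    (hy : IsTeichmullerExpansion p zy y) (hs : IsTeichmullerExpansion p zs (x + y)) (n : ℕ) :
    min (partialVal v zx n) (partialVal v zy n) ≤ partialVal v zs n := by
  obtain ⟨u, hu⟩ : ∃ u, v u = min (partialVal v zx n) (partialVal v zy n) := by
    rcases min_choice (partialVal v zx n) (partialVal v zy n) with h | h <;> rw [h]
    · obtain ⟨i, -, hi⟩ := exists_partialVal_eq v zx n
      exact ⟨_, hi.symm⟩
    · obtain ⟨i, -, hi⟩ := exists_partialVal_eq v zy n
      exact ⟨_, hi.symm⟩
  rw [← hu, le_partialVal_iff]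
  exact hx.le_map_add_digit v hy hs u
    (fun i hi => hu ▸ (min_le_left _ _).trans (partialVal_le _ _ hi))
    (fun i hi => hu ▸ (min_le_right _ _).trans (partialVal_le _ _ hi))

theorem partialVal_add_eq_min_of_lt (hx : IsTeichmullerExpansion p zx x)
    (hy : IsTeichmullerExpansion p zy y) (hs : IsTeichmullerExpansion p zs (x + y)) {n j : ℕ}
    (hj : j < n + 1) (hxj : v (zx j) = min (partialVal v zx n) (partialVal v zy n))
    (hy_lt : ∀ i < n + 1, min (partialVal v zx n) (partialVal v zy n) < v (zy i)) :
    partialVal v zs n = min (partialVal v zx n) (partialVal v zy n) := by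
  have hu : zx j ≠ 0 := v.ne_top_iff.1 (hxj ▸ (hy_lt 0 n.succ_pos).ne_top)
  have hzs : v (zs j) = v (zx j) := v.map_eq_of_lt_sub <|
    hx.lt_map_add_digit_sub v hy hs hu
      (fun i hi => hxj ▸ (min_le_left _ _).trans (partialVal_le _ _ hi))
      (fun i hi => hxj ▸ hy_lt i hi) j hj
  exact le_antisymm (hxj ▸ hzs ▸ partialVal_le _ _ hj)
    (min_partialVal_le_partialVal_add v hx hy hs n)

end partialVal_add

theorem partialVal_add_general (p : ℕ) [Fact p.Prime] {K : Type*} [Field K] [CharP K p]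
    (vK : K → WithTop ℝ)
    (hv0 : ∀ a : K, vK a = ⊤ ↔ a = 0)
    (hvmul : ∀ a b : K, vK (a * b) = vK a + vK b)
    (hvadd : ∀ a b : K, min (vK a) (vK b) ≤ vK (a + b))
    (x y : WittVector p K) (zx zy zs : ℕ → K)
    (hx : IsTeichmullerExpansion p zx x)
    (hy : IsTeichmullerExpansion p zy y)
    (hs : IsTeichmullerExpansion p zs (x + y)) (n : ℕ) :
    min (partialVal vK zx n) (partialVal vK zy n) ≤ partialVal vK zs n ∧
    ((∃! wit : Bool × ℕ, wit.2 ≤ n ∧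
        vK ((if wit.1 then zx else zy) wit.2) =
          min (partialVal vK zx n) (partialVal vK zy n)) →
      partialVal vK zs n = min (partialVal vK zx n) (partialVal vK zy n)) := by
  have hv1 : vK 1 = 0 := by
    have h : vK 1 + vK 1 = vK 1 + 0 := by rw [← hvmul, one_mul, add_zero]
    exact (add_right_inj_of_ne_top fun h1 => one_ne_zero ((hv0 1).1 h1)).1 h
  let v : AddValuation K (WithTop ℝ) := AddValuation.of vK ((hv0 0).2 rfl) hv1 hvadd hvmul
  refine ⟨min_partialVal_le_partialVal_add v hx hy hs n, ?_⟩
  rintro ⟨⟨b, j⟩, ⟨hj, hmin⟩, huniq⟩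
  have hlt (b' : Bool) (hb : b' ≠ b) (i : ℕ) (hi : i < n + 1) :
      min (partialVal vK zx n) (partialVal vK zy n) < vK ((if b' then zx else zy) i) := by
    refine lt_of_le_of_ne ?_ fun h => hb (congrArg Prod.fst (huniq (b', i) ⟨by omega, h.symm⟩))
    cases b'
    · exact (min_le_right _ _).trans (partialVal_le _ _ hi)
    · exact (min_le_left _ _).trans (partialVal_le _ _ hi)
  cases b
  · rw [min_comm] at hmin hlt ⊢
    exact partialVal_add_eq_min_of_lt v hy hx (add_comm x y ▸ hs) (by omega) hmin
      (hlt true (by decide))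
  · exact partialVal_add_eq_min_of_lt v hx hy hs (by omega) hmin (hlt false (by decide))

/-- For Witt vectors over a perfect field `K` of characteristic `p` with a valuation `v_K`,
the partial valuations satisfy `v_n(x + y) ≥ min (v_n x, v_n y)`, with equality if the
minimum is achieved exactly once (among the Teichmüller coordinates of `x` and `y` in
degrees `≤ n`). -/
theorem partialVal_add (p : ℕ) [Fact p.Prime] {K : Type*} [Field K] [CharP K p]
    [PerfectRing K p]
    (vK : K → WithTop ℝ)
    (hv0 : ∀ a : K, vK a = ⊤ ↔ a = 0)
    (hvmul : ∀ a b : K, vK (a * b) = vK a + vK b)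
    (hvadd : ∀ a b : K, min (vK a) (vK b) ≤ vK (a + b))
    (x y : WittVector p K) (zx zy zs : ℕ → K)
    (hx : IsTeichmullerExpansion p zx x)
    (hy : IsTeichmullerExpansion p zy y)
    (hs : IsTeichmullerExpansion p zs (x + y)) (n : ℕ) :
    min (partialVal vK zx n) (partialVal vK zy n) ≤ partialVal vK zs n ∧
    ((∃! wit : Bool × ℕ, wit.2 ≤ n ∧
        vK ((if wit.1 then zx else zy) wit.2) =
          min (partialVal vK zx n) (partialVal vK zy n)) →
      partialVal vK zs n = min (partialVal vK zx n) (partialVal vK zy n)) :=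
  partialVal_add_general p vK hv0 hvmul hvadd x y zx zy zs hx hy hs n
end

section
/- Let k((t^ℚ)) denote the Hahn (Mal'cev–Neumann) field of generalized power series Σ_{i∈ℚ} c_i t^i with coefficients in a field k and well-ordered support. If k is algebraically closed of characteristic p > 0, then k((t^ℚ)) is algebraically closed. -/
/-!
Newton's method on the Newton polygon, made transfinite by Zorn's lemma. For a polynomial `g` over
`k((t^Γ))` let `v` be the order of `g 0` and `γ` the largest slope of the Newton polygon of `g`.
For `w` of order `≥ γ`, the order of `g w` is `≥ v` and its coefficient at `t^v` is `Q (w_γ)`,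
where `Q` is the residue polynomial of `g` along that edge; more generally the `i`-th Taylor
coefficient of `g` at `w` is governed by the `i`-th Hasse derivative of `Q`. Hence a root `u` of
`Q` in `k` gives `w = u t^γ` with `g w` of larger order, and recentring at any such `w` never
decreases the slope. Along a chain of improving approximations to a root of `f` the coefficients
stabilise below the slopes, so the chain has a limit, which can be improved again. An approximation
that is maximal by Zorn's lemma is therefore a root.
-/

open Polynomial

namespace HahnSeries

section Coefficients

theorem lt_orderTop_of_coeff_eq_zero {Γ R : Type*} [LinearOrder Γ] [Zero R] {x : HahnSeries Γ R}
    {a : Γ} (ha : a ≤ x.orderTop) (hxa : x.coeff a = 0) : a < x.orderTop :=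
  ha.lt_of_ne (orderTop_ne_of_coeff_eq_zero hxa).symm

theorem order_eq_of_le_orderTop {Γ R : Type*} [Zero Γ] [LinearOrder Γ] [Zero R]
    {x : HahnSeries Γ R} {a : Γ} (ha : a ≤ x.orderTop) (hxa : x.coeff a ≠ 0) :
    x.order = a := by
  rw [← WithTop.coe_inj, order_eq_orderTop_of_ne_zero (ne_zero_of_coeff_ne_zero hxa)]
  exact (orderTop_le_of_coeff_ne_zero hxa).antisymm ha

theorem coeff_eq_of_lt_orderTop_sub {Γ R : Type*} [LinearOrder Γ] [AddGroup R]
    {x y : HahnSeries Γ R} {q : Γ} (hq : q < (y - x).orderTop) : x.coeff q = y.coeff q := by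
  have h := coeff_eq_zero_of_lt_orderTop hq
  rwa [coeff_sub, sub_eq_zero, eq_comm] at h

theorem le_orderTop_sum {Γ R ι : Type*} [LinearOrder Γ] [AddCommMonoid R] {s : Finset ι}
    {x : ι → HahnSeries Γ R} {a : WithTop Γ} (h : ∀ i ∈ s, a ≤ (x i).orderTop) :
    a ≤ (∑ i ∈ s, x i).orderTop :=
  le_orderTop_iff_forall.2 fun q hq => by
    rw [coeff_sum]
    exact Finset.sum_eq_zero fun i hi => coeff_eq_zero_of_lt_orderTop (hq.trans_le (h i hi))

theorem exists_coeff_eq_of_compatible {Γ R ι : Type*} [LinearOrder Γ] [Zero R]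
    (b : ι → HahnSeries Γ R) (s : ι → Γ)
    (hb : ∀ i j q, q < s i → q < s j → (b i).coeff q = (b j).coeff q) :
    ∃ x : HahnSeries Γ R, ∀ i q, q < s i → x.coeff q = (b i).coeff q := by
  classical
  let F : Γ → R := fun q => if h : ∃ i, q < s i then (b h.choose).coeff q else 0
  have hF : ∀ i q, q < s i → F q = (b i).coeff q := fun i q hq => by
    have h : ∃ i, q < s i := ⟨i, hq⟩
    simp only [F, dif_pos h]
    exact hb _ _ _ h.choose_spec hq
  refine ⟨⟨F, Set.IsWF.isPWO ?_⟩, hF⟩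
  refine Set.isWF_iff_no_descending_seq.2 fun φ hφ hmem => ?_
  obtain ⟨i, hi⟩ : ∃ i, φ 0 < s i := by
    by_contra h
    exact hmem 0 (by simp only [F, dif_neg h])
  refine Set.isWF_iff_no_descending_seq.1 (b i).isWF_support φ hφ fun m => ?_
  rw [mem_support, ← hF i _ ((hφ.antitone m.zero_le).trans_lt hi)]
  exact hmem m

variable {Γ R : Type*} [AddCommMonoid Γ] [LinearOrder Γ] [IsOrderedCancelAddMonoid Γ]

theorem coeff_mul_of_le_orderTop [NonUnitalNonAssocSemiring R] {x y : HahnSeries Γ R} {a b : Γ}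
    (ha : a ≤ x.orderTop) (hb : b ≤ y.orderTop) :
    (x * y).coeff (a + b) = x.coeff a * y.coeff b := by
  by_cases hxa : x.coeff a = 0
  · have hlt : ((a + b : Γ) : WithTop Γ) < (x * y).orderTop :=
      (WithTop.add_lt_add_of_lt_of_le WithTop.coe_ne_top (lt_orderTop_of_coeff_eq_zero ha hxa)
        hb).trans_le orderTop_add_le_mul
    rw [coeff_eq_zero_of_lt_orderTop hlt, hxa, zero_mul]
  by_cases hyb : y.coeff b = 0
  · have hlt : ((a + b : Γ) : WithTop Γ) < (x * y).orderTop :=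
      (WithTop.add_lt_add_of_le_of_lt WithTop.coe_ne_top ha
        (lt_orderTop_of_coeff_eq_zero hb hyb)).trans_le orderTop_add_le_mul
    rw [coeff_eq_zero_of_lt_orderTop hlt, hyb, mul_zero]
  rw [← order_eq_of_le_orderTop ha hxa, ← order_eq_of_le_orderTop hb hyb,
    coeff_mul_order_add_order, leadingCoeff_eq, leadingCoeff_eq]

theorem coeff_pow_of_le_orderTop [Semiring R] {x : HahnSeries Γ R} {a : Γ} (ha : a ≤ x.orderTop)
    (n : ℕ) : (x ^ n).coeff (n • a) = x.coeff a ^ n := by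
  induction n with
  | zero => simp
  | succ n ih =>
    have hn : (n • a : Γ) ≤ (x ^ n).orderTop :=
      (nsmul_le_nsmul_right ha n).trans orderTop_nsmul_le_orderTop_pow
    rw [succ_nsmul, pow_succ, pow_succ, coeff_mul_of_le_orderTop hn ha, ih]

end Coefficients

section Residue

variable {Γ R : Type*} [AddCommGroup Γ] [LinearOrder Γ] [IsOrderedAddMonoid Γ] [CommRing R]

/-- The residue polynomial of `g` along the line `j ↦ v - j • γ` of its Newton diagram. -/
noncomputable def residuePoly (g : (HahnSeries Γ R)[X]) (v γ : Γ) : R[X] :=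
  ∑ j ∈ Finset.range (g.natDegree + 1), monomial j ((g.coeff j).coeff (v - j • γ))

variable {g : (HahnSeries Γ R)[X]} {v γ : Γ}

theorem coeff_residuePoly (g : (HahnSeries Γ R)[X]) (v γ : Γ) (j : ℕ) :
    (residuePoly g v γ).coeff j = (g.coeff j).coeff (v - j • γ) := by
  rw [residuePoly, finsetSum_coeff, Finset.sum_eq_single j]
  · exact coeff_monomial_same _ _
  · exact fun i _ hij => coeff_monomial_of_ne _ hij.symm
  · intro hj
    rw [coeff_monomial_same, coeff_eq_zero_of_natDegree_lt (by simpa using hj),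
      HahnSeries.coeff_zero]

theorem residuePoly_hasseDeriv (g : (HahnSeries Γ R)[X]) (v γ : Γ) (i : ℕ) :
    residuePoly (hasseDeriv i g) (v - i • γ) γ = hasseDeriv i (residuePoly g v γ) := by
  ext l
  rw [coeff_residuePoly, hasseDeriv_coeff, hasseDeriv_coeff, coeff_residuePoly, ← nsmul_eq_mul,
    ← nsmul_eq_mul, coeff_nsmul, Pi.smul_apply, sub_sub, ← add_nsmul, add_comm i]

theorem le_orderTop_coeff_hasseDeriv (hg : ∀ j : ℕ, ↑(v - j • γ) ≤ (g.coeff j).orderTop)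
    (i l : ℕ) : ↑(v - i • γ - l • γ) ≤ ((hasseDeriv i g).coeff l).orderTop := by
  rw [hasseDeriv_coeff, ← nsmul_eq_mul, sub_sub, ← add_nsmul, add_comm i]
  exact (hg (l + i)).trans (orderTop_le_orderTop_smul _ _)

theorem le_orderTop_eval (hg : ∀ j : ℕ, ↑(v - j • γ) ≤ (g.coeff j).orderTop)
    {w : HahnSeries Γ R} (hw : γ ≤ w.orderTop) : v ≤ (g.eval w).orderTop := by
  rw [eval_eq_sum_range]
  refine le_orderTop_sum fun j _ => le_trans ?_ orderTop_add_le_mul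
  calc (v : WithTop Γ) = ↑(v - j • γ) + ↑(j • γ) := by
        rw [← WithTop.coe_add, sub_add_cancel]
    _ ≤ (g.coeff j).orderTop + (w ^ j).orderTop := by
      gcongr
      · exact hg j
      · exact (nsmul_le_nsmul_right hw j).trans orderTop_nsmul_le_orderTop_pow

theorem coeff_eval (hg : ∀ j : ℕ, ↑(v - j • γ) ≤ (g.coeff j).orderTop)
    {w : HahnSeries Γ R} (hw : γ ≤ w.orderTop) :
    (g.eval w).coeff v = (residuePoly g v γ).eval (w.coeff γ) := by
  rw [eval_eq_sum_range, coeff_sum, residuePoly, eval_finsetSum]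
  refine Finset.sum_congr rfl fun j _ => ?_
  have hwj : ↑(j • γ) ≤ (w ^ j).orderTop :=
    (nsmul_le_nsmul_right hw j).trans orderTop_nsmul_le_orderTop_pow
  rw [eval_monomial, ← coeff_pow_of_le_orderTop hw, ← coeff_mul_of_le_orderTop (hg j) hwj,
    sub_add_cancel]

theorem le_orderTop_taylor_coeff (hg : ∀ j : ℕ, ↑(v - j • γ) ≤ (g.coeff j).orderTop)
    {w : HahnSeries Γ R} (hw : γ ≤ w.orderTop) (i : ℕ) :
    ↑(v - i • γ) ≤ ((taylor w g).coeff i).orderTop := by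
  rw [taylor_coeff]
  exact le_orderTop_eval (le_orderTop_coeff_hasseDeriv hg i) hw

theorem coeff_taylor_coeff (hg : ∀ j : ℕ, ↑(v - j • γ) ≤ (g.coeff j).orderTop)
    {w : HahnSeries Γ R} (hw : γ ≤ w.orderTop) (i : ℕ) :
    ((taylor w g).coeff i).coeff (v - i • γ) =
      (hasseDeriv i (residuePoly g v γ)).eval (w.coeff γ) := by
  rw [taylor_coeff, coeff_eval (le_orderTop_coeff_hasseDeriv hg i) hw, residuePoly_hasseDeriv]

end Residue

section NewtonSlope

variable {Γ R : Type*} [Field Γ] [LinearOrder Γ] [IsStrictOrderedRing Γ] [CommRing R]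

/-- The largest slope of the Newton polygon of `g`: over an algebraically closed field and for
`g 0 ≠ 0`, the largest order of a root of `g`. It is `0` if `g` is constant. -/
noncomputable def newtonSlope (g : (HahnSeries Γ R)[X]) : Γ :=
  if h : (g.support.erase 0).Nonempty then
    (g.support.erase 0).sup' h fun j => ((g.coeff 0).order - (g.coeff j).order) / j
  else 0

variable {g : (HahnSeries Γ R)[X]}

theorem div_le_newtonSlope {j : ℕ} (hj : j ≠ 0) (hgj : g.coeff j ≠ 0) :
    ((g.coeff 0).order - (g.coeff j).order) / j ≤ newtonSlope g := by
  have hmem : j ∈ g.support.erase 0 := Finset.mem_erase.2 ⟨hj, mem_support_iff.2 hgj⟩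
  rw [newtonSlope, dif_pos ⟨j, hmem⟩]
  exact Finset.le_sup' (fun j : ℕ => ((g.coeff 0).order - (g.coeff j).order) / j) hmem

theorem le_orderTop_coeff_newtonSlope (g : (HahnSeries Γ R)[X]) (j : ℕ) :
    ↑((g.coeff 0).order - j • newtonSlope g) ≤ (g.coeff j).orderTop := by
  rcases eq_or_ne (g.coeff j) 0 with hgj | hgj
  · simp [hgj]
  rw [← order_eq_orderTop_of_ne_zero hgj, WithTop.coe_le_coe, nsmul_eq_mul]
  rcases eq_or_ne j 0 with rfl | hj
  · simp
  have hslope := div_le_newtonSlope hj hgj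
  rw [div_le_iff₀ (by positivity)] at hslope
  linarith

theorem exists_order_coeff_eq_newtonSlope (hg : 0 < g.natDegree) :
    ∃ j ≠ 0, g.coeff j ≠ 0 ∧
      (g.coeff j).order = (g.coeff 0).order - j • newtonSlope g := by
  have hne : (g.support.erase 0).Nonempty := ⟨g.natDegree, Finset.mem_erase.2
    ⟨hg.ne', natDegree_mem_support_of_nonzero (ne_zero_of_natDegree_gt hg)⟩⟩
  obtain ⟨j, hj, hsup⟩ := Finset.exists_mem_eq_sup' hne
    fun j : ℕ => ((g.coeff 0).order - (g.coeff j).order) / j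
  obtain ⟨hj0, hjg⟩ := Finset.mem_erase.1 hj
  refine ⟨j, hj0, mem_support_iff.1 hjg, ?_⟩
  rw [newtonSlope, dif_pos hne, hsup, nsmul_eq_mul]
  field_simp
  ring

theorem natDegree_residuePoly_newtonSlope_pos (hg : 0 < g.natDegree) :
    0 < (residuePoly g (g.coeff 0).order (newtonSlope g)).natDegree := by
  obtain ⟨j, hj0, hgj, hord⟩ := exists_order_coeff_eq_newtonSlope hg
  have hQj : (residuePoly g (g.coeff 0).order (newtonSlope g)).coeff j ≠ 0 := by
    rw [coeff_residuePoly, ← hord, ← leadingCoeff_eq]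
    exact leadingCoeff_ne_zero.2 hgj
  exact (Nat.pos_of_ne_zero hj0).trans_le (le_natDegree_of_ne_zero hQj)

theorem order_coeff_zero_le_taylor {w : HahnSeries Γ R} (hw : newtonSlope g ≤ w.orderTop)
    (h0 : (taylor w g).coeff 0 ≠ 0) : (g.coeff 0).order ≤ ((taylor w g).coeff 0).order := by
  have h := le_orderTop_taylor_coeff (le_orderTop_coeff_newtonSlope g) hw 0
  rwa [zero_smul, sub_zero, ← order_eq_orderTop_of_ne_zero h0, WithTop.coe_le_coe] at h

theorem newtonSlope_le_taylor (hg : 0 < g.natDegree) {w : HahnSeries Γ R}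
    (hw : newtonSlope g ≤ w.orderTop) (h0 : (taylor w g).coeff 0 ≠ 0) :
    newtonSlope g ≤ newtonSlope (taylor w g) := by
  set γ := newtonSlope g
  set v := (g.coeff 0).order
  set Q := residuePoly g v γ
  have hd : 0 < Q.natDegree := natDegree_residuePoly_newtonSlope_pos hg
  have hline := le_orderTop_coeff_newtonSlope g
  -- The top Hasse derivative of `Q` is its leading coefficient, so the Taylor coefficient of `g`
  -- at `w` of index `deg Q` still has order exactly `v - deg Q • γ`.
  have hcoeff : ((taylor w g).coeff Q.natDegree).coeff (v - Q.natDegree • γ) ≠ 0 := by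
    rw [coeff_taylor_coeff hline hw, hasseDeriv_natDegree_eq_C, eval_C]
    exact Polynomial.leadingCoeff_ne_zero.2 (ne_zero_of_natDegree_gt hd)
  have hord := order_eq_of_le_orderTop (le_orderTop_taylor_coeff hline hw _) hcoeff
  have hv := order_coeff_zero_le_taylor hw h0
  calc γ ≤ (((taylor w g).coeff 0).order - (v - Q.natDegree • γ)) / Q.natDegree := by
        rw [le_div_iff₀ (by exact_mod_cast hd), nsmul_eq_mul]
        linarith
    _ ≤ newtonSlope (taylor w g) :=
        hord ▸ div_le_newtonSlope hd.ne' (ne_zero_of_coeff_ne_zero hcoeff)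

end NewtonSlope

section ApproximateRoots

variable {Γ k : Type*} [Field Γ] [LinearOrder Γ] [IsStrictOrderedRing Γ] [Field k]

theorem exists_lt_orderTop_eval [IsAlgClosed k] {g : (HahnSeries Γ k)[X]}
    (hg : 0 < g.natDegree) :
    ∃ w : HahnSeries Γ k,
      newtonSlope g ≤ w.orderTop ∧ (g.coeff 0).order < (g.eval w).orderTop := by
  obtain ⟨u, hu⟩ := IsAlgClosed.exists_root (residuePoly g (g.coeff 0).order (newtonSlope g))
    (natDegree_pos_iff_degree_pos.1 (natDegree_residuePoly_newtonSlope_pos hg)).ne'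
  have hline := le_orderTop_coeff_newtonSlope g
  have hw : newtonSlope g ≤ (single (newtonSlope g) u).orderTop := orderTop_single_le
  refine ⟨_, hw, lt_orderTop_of_coeff_eq_zero (le_orderTop_eval hline hw) ?_⟩
  rwa [coeff_eval hline hw, coeff_single_same]

def IsBetterApprox (f : (HahnSeries Γ k)[X]) (a b : HahnSeries Γ k) : Prop :=
  newtonSlope (taylor a f) ≤ (b - a).orderTop ∧ (f.eval a).order < (f.eval b).order

variable {f : (HahnSeries Γ k)[X]} {a b c : HahnSeries Γ k}

theorem taylor_sub_taylor (f : (HahnSeries Γ k)[X]) (a b : HahnSeries Γ k) :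
    taylor (b - a) (taylor a f) = taylor b f := by
  rw [taylor_taylor, sub_add_cancel]

theorem order_eval_le (hb : newtonSlope (taylor a f) ≤ (b - a).orderTop) (hfb : f.eval b ≠ 0) :
    (f.eval a).order ≤ (f.eval b).order := by
  have h0 : (taylor (b - a) (taylor a f)).coeff 0 ≠ 0 := by
    rwa [taylor_sub_taylor, taylor_coeff_zero]
  simpa only [taylor_sub_taylor, taylor_coeff_zero] using order_coeff_zero_le_taylor hb h0

theorem newtonSlope_taylor_le (hf : 0 < f.natDegree)
    (hb : newtonSlope (taylor a f) ≤ (b - a).orderTop) (hfb : f.eval b ≠ 0) :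
    newtonSlope (taylor a f) ≤ newtonSlope (taylor b f) := by
  have h0 : (taylor (b - a) (taylor a f)).coeff 0 ≠ 0 := by
    rwa [taylor_sub_taylor, taylor_coeff_zero]
  rw [← taylor_sub_taylor f a b]
  exact newtonSlope_le_taylor (by rwa [natDegree_taylor]) hb h0

theorem le_orderTop_sub_trans (hf : 0 < f.natDegree) (hfb : f.eval b ≠ 0)
    (hab : newtonSlope (taylor a f) ≤ (b - a).orderTop)
    (hbc : newtonSlope (taylor b f) ≤ (c - b).orderTop) :
    newtonSlope (taylor a f) ≤ (c - a).orderTop := by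
  rw [← sub_add_sub_cancel c b a]
  refine le_trans (le_min ?_ hab) min_orderTop_le_orderTop_add
  exact (WithTop.coe_le_coe.2 (newtonSlope_taylor_le hf hab hfb)).trans hbc

theorem IsBetterApprox.trans (hf : 0 < f.natDegree) (hroot : ∀ x, f.eval x ≠ 0)
    (hab : IsBetterApprox f a b) (hbc : IsBetterApprox f b c) : IsBetterApprox f a c :=
  ⟨le_orderTop_sub_trans hf (hroot b) hab.1 hbc.1, hab.2.trans hbc.2⟩

theorem exists_isBetterApprox [IsAlgClosed k] (hf : 0 < f.natDegree) (hroot : ∀ x, f.eval x ≠ 0)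
    (a : HahnSeries Γ k) : ∃ b, IsBetterApprox f a b := by
  obtain ⟨w, hw, hlt⟩ := exists_lt_orderTop_eval (g := taylor a f) (by rwa [natDegree_taylor])
  rw [taylor_coeff_zero, taylor_eval, ← order_eq_orderTop_of_ne_zero (hroot _),
    WithTop.coe_lt_coe] at hlt
  exact ⟨w + a, by rwa [add_sub_cancel_right], hlt⟩

theorem exists_isBetterApprox_of_isChain [IsAlgClosed k] (hf : 0 < f.natDegree)
    (hroot : ∀ x, f.eval x ≠ 0) {C : Set (HahnSeries Γ k)}
    (hC : IsChain (IsBetterApprox f) C) :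
    ∃ y, ∀ a ∈ C, IsBetterApprox f a y := by
  obtain ⟨x, hxC⟩ : ∃ x, ∀ a ∈ C, newtonSlope (taylor a f) ≤ (x - a).orderTop := by
    obtain ⟨x, hx⟩ := exists_coeff_eq_of_compatible ((↑) : C → HahnSeries Γ k)
      (fun a => newtonSlope (taylor a.1 f)) fun a b q ha hb => by
        rcases eq_or_ne a b with rfl | hne
        · rfl
        rcases hC a.2 b.2 (Subtype.coe_ne_coe.2 hne) with h | h
        · exact coeff_eq_of_lt_orderTop_sub ((WithTop.coe_lt_coe.2 ha).trans_le h.1)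
        · exact (coeff_eq_of_lt_orderTop_sub ((WithTop.coe_lt_coe.2 hb).trans_le h.1)).symm
    refine ⟨x, fun a ha => le_orderTop_iff_forall.2 fun q hq => ?_⟩
    rw [coeff_sub, hx ⟨a, ha⟩ q (WithTop.coe_lt_coe.1 hq), sub_self]
  obtain ⟨y, hy⟩ := exists_isBetterApprox hf hroot x
  exact ⟨y, fun a ha => ⟨le_orderTop_sub_trans hf (hroot x) (hxC a ha) hy.1,
    (order_eval_le (hxC a ha) (hroot x)).trans_lt hy.2⟩⟩

theorem exists_eval_eq_zero [IsAlgClosed k] (hf : 0 < f.natDegree) : ∃ x, f.eval x = 0 := by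
  by_contra! hroot
  obtain ⟨m, hm⟩ := exists_maximal_of_chains_bounded
    (fun _ hC => exists_isBetterApprox_of_isChain hf hroot hC) (IsBetterApprox.trans hf hroot)
  obtain ⟨b, hb⟩ := exists_isBetterApprox hf hroot m
  exact lt_asymm hb.2 (hm b hb).2

instance isAlgClosed [IsAlgClosed k] : IsAlgClosed (HahnSeries Γ k) :=
  IsAlgClosed.of_exists_root _ fun _ _ hirr => exists_eval_eq_zero hirr.natDegree_pos

end ApproximateRoots

end HahnSeries

theorem hahnSeries_rat_isAlgClosed_general
    {k : Type*} [Field k] [IsAlgClosed k] :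
    IsAlgClosed (HahnSeries ℚ k) :=
  HahnSeries.isAlgClosed

/-- If `k` is an algebraically closed field of characteristic `p > 0`, then the
Hahn (Mal'cev–Neumann) field `k((t^ℚ))` of generalized power series with rational
exponents and well-ordered support is algebraically closed. -/
theorem hahnSeries_rat_isAlgClosed
    {k : Type*} [Field k] [IsAlgClosed k] (p : ℕ) [Fact p.Prime] [CharP k p] :
    IsAlgClosed (HahnSeries ℚ k) :=
  hahnSeries_rat_isAlgClosed_general
end
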